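/- arXiv:1712.10299 — 2 statements merged into one kernel-verified Lean document; each statement's English description precedes it below -/
import Mathlib

section
/- Let (X, Y, Z, p_{Y,Z|X}) be a discrete memoryless WTC, let c_n = (f_n, φ_n) be an (n,R)-code for it with induced joint PMF P̃^{(c_n)} on M_n × X^n × Y^n × Z^n × M_n, and let q_Z be any PMF on Z. Define the GPC code b_n = (g_n, ψ_n) for the GPC (Z, X, Y, q_Z, p_{Y|X,Z}) by g_n = P̃^{(c_n)}_{X^n|Z^n,M} (the conditional PMF of X^n given (Z^n, M) under P̃^{(c_n)}) and ψ_n = φ_n, with induced joint PMF Q̃^{(b_n)} on Z^n × M_n × X^n × Y^n × M_n. Then ‖P̃^{(c_n)} − Q̃^{(b_n)}‖_TV = ‖P̃^{(c_n)}_{M,Z^n} − p^U_{M_n} ⊗ q_Z^n‖_TV. -/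
open scoped BigOperators Classical

noncomputable section

/-- Total variation distance between two PMFs on a finite set. -/
def tvDist {Ω : Type*} [Fintype Ω] (p q : Ω → ℝ) : ℝ :=
  (1 / 2) * ∑ x, |p x - q x|

/-- `p` is a probability mass function on the finite set `Ω`. -/
def IsPMF {Ω : Type*} [Fintype Ω] (p : Ω → ℝ) : Prop := (∀ x, 0 ≤ p x) ∧ ∑ x, p x = 1

/-- The message set `[1 : 2^{nR}]`, modelled as `Fin ⌈2^{nR}⌉`. -/
abbrev Msg (n : ℕ) (R : ℝ) : Type := Fin ⌈(2 : ℝ) ^ ((n : ℝ) * R)⌉₊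

/-- An `(n,R)`-code for the wiretap channel: a stochastic encoder `f_n : M_n → P(Xⁿ)`
(given by the data `enc`, required to be a transition kernel via `WTCCode.valid`) and a
decoder `φ_n : Yⁿ → M_n`. -/
structure WTCCode (X Y Z : Type) [Fintype X] [Fintype Y] [Fintype Z] (n : ℕ) (R : ℝ) where
  enc : Msg n R → (Fin n → X) → ℝ
  dec : (Fin n → Y) → Msg n R

/-- The encoder of a wiretap code is an honest stochastic map. -/
def WTCCode.valid {X Y Z : Type} [Fintype X] [Fintype Y] [Fintype Z] {n : ℕ} {R : ℝ}
    (c : WTCCode X Y Z n R) : Prop := ∀ m, IsPMF (c.enc m)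

/-- An `(n,R)`-code for the Gelfand-Pinsker channel: a stochastic encoder
`g_n : Zⁿ × M_n → P(Xⁿ)` (data `enc`, kernel property via `GPCCode.valid`) and a decoder
`ψ_n : Yⁿ → M_n`. -/
structure GPCCode (Z X Y : Type) [Fintype Z] [Fintype X] [Fintype Y] (n : ℕ) (R : ℝ) where
  enc : (Fin n → Z) → Msg n R → (Fin n → X) → ℝ
  dec : (Fin n → Y) → Msg n R

/-- The encoder of a Gelfand-Pinsker code is an honest stochastic map. -/
def GPCCode.valid {Z X Y : Type} [Fintype Z] [Fintype X] [Fintype Y] {n : ℕ} {R : ℝ}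
    (b : GPCCode Z X Y n R) : Prop := ∀ z m, IsPMF (b.enc z m)

variable {X Y Z : Type} [Fintype X] [Fintype Y] [Fintype Z] {n : ℕ} {R : ℝ}

/-- The joint PMF `P̃^{(c_n)}` on `M_n × Xⁿ × Yⁿ × Zⁿ × M_n` induced by an `(n,R)`-wiretap
code `c` over the memoryless WTC with transition kernel `W = p_{Y,Z|X}`:
`P̃(m,x,y,z,m̂) = |M_n|⁻¹ f_n(x|m) Π_i W(y_i,z_i|x_i) 1{m̂ = φ_n(y)}`. -/
def WTCCode.joint (W : X → Y × Z → ℝ) (c : WTCCode X Y Z n R) :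
    Msg n R × (Fin n → X) × (Fin n → Y) × (Fin n → Z) × Msg n R → ℝ := fun ω =>
  ((Fintype.card (Msg n R) : ℝ)⁻¹) * c.enc ω.1 ω.2.1
    * (∏ i, W (ω.2.1 i) (ω.2.2.1 i, ω.2.2.2.1 i))
    * (if c.dec ω.2.2.1 = ω.2.2.2.2 then 1 else 0)

/-- The marginal `P̃^{(c_n)}_{M,Zⁿ}`. -/
def WTCCode.margMZ (W : X → Y × Z → ℝ) (c : WTCCode X Y Z n R) :
    Msg n R × (Fin n → Z) → ℝ := fun ω =>
  ∑ x, ∑ y, ∑ mh, c.joint W (ω.1, x, y, ω.2, mh)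

/-- The marginal `P̃^{(c_n)}_{M,M̂,Zⁿ}` (recorded in the order `(M, Zⁿ, M̂)`). -/
def WTCCode.margMZM (W : X → Y × Z → ℝ) (c : WTCCode X Y Z n R) :
    Msg n R × (Fin n → Z) × Msg n R → ℝ := fun ω =>
  ∑ x, ∑ y, c.joint W (ω.1, x, y, ω.2.1, ω.2.2)

/-- The conditional marginal `p_{Y|X,Z}` of the WTC transition kernel `p_{Y,Z|X}`
(defined arbitrarily — uniform — where `p_{Z|X}(z|x) = 0`). -/
def condYgivenXZ (W : X → Y × Z → ℝ) : X → Z → Y → ℝ := fun x z y =>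
  if 0 < ∑ y', W x (y', z) then W x (y, z) / ∑ y', W x (y', z)
  else (Fintype.card Y : ℝ)⁻¹

/-- The stochastic Gelfand-Pinsker encoder `g_n = P̃^{(c_n)}_{Xⁿ|Zⁿ,M}` obtained from a
wiretap code `c` by conditioning its induced joint PMF on `(Zⁿ, M)` (defined arbitrarily —
uniform — where `P̃^{(c_n)}_{M,Zⁿ} = 0`). -/
def inducedGPEnc (W : X → Y × Z → ℝ) (c : WTCCode X Y Z n R) :
    (Fin n → Z) → Msg n R → (Fin n → X) → ℝ := fun z m x =>
  if 0 < c.margMZ W (m, z)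
  then (∑ y, ∑ mh, c.joint W (m, x, y, z, mh)) / c.margMZ W (m, z)
  else (Fintype.card (Fin n → X) : ℝ)⁻¹

/-- The Gelfand-Pinsker code `b_n = (g_n, ψ_n)` induced by a wiretap code `c_n = (f_n, φ_n)`:
`g_n = P̃^{(c_n)}_{Xⁿ|Zⁿ,M}` and `ψ_n = φ_n`. -/
def WTCCode.toGPC (W : X → Y × Z → ℝ) (c : WTCCode X Y Z n R) : GPCCode Z X Y n R where
  enc := inducedGPEnc W c
  dec := c.dec

/-- The joint PMF `Q̃^{(b_n)}` induced by an `(n,R)`-Gelfand-Pinsker code `b` over the GPC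
with state PMF `q_Z` and transition kernel `Wg = q_{Y|X,Z}`, recorded on the sample space
`M_n × Xⁿ × Yⁿ × Zⁿ × M_n` (the same ordering as `WTCCode.joint`, so that the two induced
distributions can be compared):
`Q̃(m,x,y,z,m̂) = q_Z^n(z) |M_n|⁻¹ g_n(x|z,m) Π_i Wg(y_i|x_i,z_i) 1{m̂ = ψ_n(y)}`. -/
def GPCCode.joint (qZ : Z → ℝ) (Wg : X → Z → Y → ℝ) (b : GPCCode Z X Y n R) :
    Msg n R × (Fin n → X) × (Fin n → Y) × (Fin n → Z) × Msg n R → ℝ := fun ω =>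
  (∏ i, qZ (ω.2.2.2.1 i)) * ((Fintype.card (Msg n R) : ℝ)⁻¹)
    * b.enc ω.2.2.2.1 ω.1 ω.2.1
    * (∏ i, Wg (ω.2.1 i) (ω.2.2.2.1 i) (ω.2.2.1 i))
    * (if b.dec ω.2.2.1 = ω.2.2.2.2 then 1 else 0)

/-- The error probability `ℙ_{Q̃^{(b_n)}}(M̂ ≠ M)` of a Gelfand-Pinsker code. -/
def GPCCode.errProb (qZ : Z → ℝ) (Wg : X → Z → Y → ℝ) (b : GPCCode Z X Y n R) : ℝ :=
  ∑ ω : Msg n R × (Fin n → X) × (Fin n → Y) × (Fin n → Z) × Msg n R,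
    if ω.2.2.2.2 ≠ ω.1 then b.joint qZ Wg ω else 0

/-- The target measure `p^U_{M_n} ⊗ q_Z^n` on `M_n × Zⁿ`. -/
def targetMZ (qZ : Z → ℝ) (n : ℕ) (R : ℝ) : Msg n R × (Fin n → Z) → ℝ := fun ω =>
  ((Fintype.card (Msg n R) : ℝ)⁻¹) * ∏ i, qZ (ω.2 i)

/-- The target measure `p^U_{M_n} · 1{M̂ = M} · q_Z^n` on `M_n × Zⁿ × M_n`. -/
def targetMZM (qZ : Z → ℝ) (n : ℕ) (R : ℝ) : Msg n R × (Fin n → Z) × Msg n R → ℝ :=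
  fun ω => ((Fintype.card (Msg n R) : ℝ)⁻¹) * (if ω.2.2 = ω.1 then 1 else 0)
    * ∏ i, qZ (ω.2.1 i)


/-!
Under both `P̃^{(c_n)}` and `Q̃^{(b_n)}` the conditional law of `(Xⁿ, Yⁿ, M̂)` given `(M, Zⁿ)` is
the same kernel `g_n(x|z,m) · Π_i p_{Y|X,Z}(y_i|x_i,z_i) · 1{m̂ = φ_n(y)}`: for `Q̃` by
construction, for `P̃` because `g_n` and `p_{Y|X,Z}` are its conditionals. Two distributions
sharing a conditional kernel are exactly as far apart in total variation as their marginals.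
-/

section PMF

variable {α β : Type*} [Fintype α] [Fintype β]

lemma IsPMF.nonempty {p : α → ℝ} (hp : IsPMF p) : Nonempty α := by
  by_contra h
  rw [not_nonempty_iff] at h
  simpa using hp.2

lemma isPMF_ite_eq [DecidableEq α] (a : α) : IsPMF (fun b => if a = b then (1 : ℝ) else 0) :=
  ⟨fun b => by dsimp only; split_ifs <;> norm_num, by simp⟩

lemma IsPMF.prod_kernel {p : α → ℝ} {K : α → β → ℝ} (hp : IsPMF p) (hK : ∀ a, IsPMF (K a)) :
    IsPMF (fun ω : α × β => p ω.1 * K ω.1 ω.2) := by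
  refine ⟨fun ω => mul_nonneg (hp.1 _) ((hK _).1 _), ?_⟩
  simp [Fintype.sum_prod_type, ← Finset.mul_sum, (hK _).2, hp.2]

lemma isPMF_pi {ι : Type*} [Fintype ι] [DecidableEq ι] {p : ι → α → ℝ}
    (hp : ∀ i, IsPMF (p i)) : IsPMF (fun x : ι → α => ∏ i, p i (x i)) :=
  ⟨fun x => Finset.prod_nonneg fun i _ => (hp i).1 _,
    by rw [← Fintype.prod_sum]; exact Finset.prod_eq_one fun i _ => (hp i).2⟩

def normalizeOrUniform (f : α → ℝ) : α → ℝ := fun a =>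
  if 0 < ∑ a', f a' then f a / ∑ a', f a' else (Fintype.card α : ℝ)⁻¹

lemma isPMF_normalizeOrUniform [Nonempty α] {f : α → ℝ} (hf : ∀ a, 0 ≤ f a) :
    IsPMF (normalizeOrUniform f) := by
  unfold normalizeOrUniform
  split_ifs with hpos
  · exact ⟨fun a => div_nonneg (hf a) hpos.le, by rw [← Finset.sum_div, div_self hpos.ne']⟩
  · exact ⟨fun _ => by positivity, by simp⟩

lemma sum_mul_normalizeOrUniform {f : α → ℝ} (hf : ∀ a, 0 ≤ f a) (a : α) :
    (∑ a', f a') * normalizeOrUniform f a = f a := by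
  unfold normalizeOrUniform
  split_ifs with hpos
  · exact mul_div_cancel₀ _ hpos.ne'
  · have hsum : ∑ a', f a' = 0 := le_antisymm (not_lt.mp hpos) (Finset.sum_nonneg fun a _ => hf a)
    rw [hsum, zero_mul, ((Finset.sum_eq_zero_iff_of_nonneg fun a _ => hf a).mp hsum a
      (Finset.mem_univ a))]

lemma tvDist_comp_equiv (e : α ≃ β) (p q : β → ℝ) : tvDist (p ∘ e) (q ∘ e) = tvDist p q := by
  unfold tvDist
  rw [← e.sum_comp (fun b => |p b - q b|)]
  rfl

lemma tvDist_mul_kernel (p q : α → ℝ) {K : α → β → ℝ} (hK : ∀ a, IsPMF (K a)) :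
    tvDist (fun ω : α × β => p ω.1 * K ω.1 ω.2) (fun ω => q ω.1 * K ω.1 ω.2) = tvDist p q := by
  unfold tvDist
  congr 1
  simp only [← sub_mul, abs_mul, Fintype.sum_prod_type, abs_of_nonneg ((hK _).1 _),
    ← Finset.mul_sum, (hK _).2, mul_one]

end PMF

lemma condYgivenXZ_eq_normalizeOrUniform {X Y Z : Type} [Fintype Y] (W : X → Y × Z → ℝ)
    (x : X) (z : Z) : condYgivenXZ W x z = normalizeOrUniform fun y => W x (y, z) :=
  rfl

def prodRegroup (A B C D E : Type*) : A × B × C × D × E ≃ (A × D) × (B × C × E) where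
  toFun ω := ((ω.1, ω.2.2.2.1), (ω.2.1, ω.2.2.1, ω.2.2.2.2))
  invFun p := (p.1.1, p.2.1, p.2.2.1, p.1.2, p.2.2.2)
  left_inv _ := rfl
  right_inv _ := rfl

namespace WTCCode

def condKernel (W : X → Y × Z → ℝ) (c : WTCCode X Y Z n R) (a : Msg n R × (Fin n → Z))
    (r : (Fin n → X) × (Fin n → Y) × Msg n R) : ℝ :=
  inducedGPEnc W c a.2 a.1 r.1
    * ((∏ i, condYgivenXZ W (r.1 i) (a.2 i) (r.2.1 i)) * if c.dec r.2.1 = r.2.2 then 1 else 0)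

variable {W : X → Y × Z → ℝ} (c : WTCCode X Y Z n R)

lemma joint_nonneg (hW : ∀ x, IsPMF (W x)) (hc : c.valid) (ω) : 0 ≤ c.joint W ω :=
  mul_nonneg (mul_nonneg (mul_nonneg (by positivity) ((hc ω.1).1 ω.2.1))
    (Finset.prod_nonneg fun i _ => (hW _).1 _)) (by split <;> norm_num)

lemma inducedGPEnc_eq_normalizeOrUniform (z : Fin n → Z) (m : Msg n R) :
    inducedGPEnc W c z m = normalizeOrUniform fun x => ∑ y, ∑ mh, c.joint W (m, x, y, z, mh) :=
  rfl

lemma sum_joint_Yn_Mhat (m : Msg n R) (x : Fin n → X) (z : Fin n → Z) :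
    ∑ y, ∑ mh, c.joint W (m, x, y, z, mh)
      = (Fintype.card (Msg n R) : ℝ)⁻¹ * c.enc m x * ∏ i, ∑ y', W (x i) (y', z i) := by
  simp only [joint, ← Finset.mul_sum, Finset.sum_ite_eq, Finset.mem_univ, if_true, mul_one]
  rw [Fintype.prod_sum]

lemma isPMF_condKernel (hW : ∀ x, IsPMF (W x)) (hc : c.valid) (a : Msg n R × (Fin n → Z)) :
    IsPMF (c.condKernel W a) := by
  have : Nonempty (Fin n → X) := (hc a.1).nonempty
  have hX : IsPMF (inducedGPEnc W c a.2 a.1) := by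
    rw [inducedGPEnc_eq_normalizeOrUniform]
    exact isPMF_normalizeOrUniform fun x => Finset.sum_nonneg fun _ _ =>
      Finset.sum_nonneg fun _ _ => c.joint_nonneg hW hc _
  have hY (x : X) (z : Z) : IsPMF (condYgivenXZ W x z) := by
    have : Nonempty Y := (hW x).nonempty.map Prod.fst
    rw [condYgivenXZ_eq_normalizeOrUniform]
    exact isPMF_normalizeOrUniform fun y => (hW x).1 _
  exact hX.prod_kernel fun x =>
    (isPMF_pi fun i => hY (x i) (a.2 i)).prod_kernel fun y => isPMF_ite_eq (c.dec y)

lemma joint_eq_margMZ_mul_condKernel (hW : ∀ x, IsPMF (W x)) (hc : c.valid) (m : Msg n R)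
    (x : Fin n → X) (y : Fin n → Y) (z : Fin n → Z) (mh : Msg n R) :
    c.joint W (m, x, y, z, mh) = c.margMZ W (m, z) * c.condKernel W (m, z) (x, y, mh) := by
  have hY (i : Fin n) : (∑ y', W (x i) (y', z i)) * condYgivenXZ W (x i) (z i) (y i)
      = W (x i) (y i, z i) := by
    rw [condYgivenXZ_eq_normalizeOrUniform]
    exact sum_mul_normalizeOrUniform (fun y' => (hW _).1 _) (y i)
  have hX : c.margMZ W (m, z) * inducedGPEnc W c z m x
      = ∑ y, ∑ mh, c.joint W (m, x, y, z, mh) := by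
    rw [inducedGPEnc_eq_normalizeOrUniform]
    exact sum_mul_normalizeOrUniform (fun x => Finset.sum_nonneg fun _ _ =>
      Finset.sum_nonneg fun _ _ => c.joint_nonneg hW hc _) x
  simp only [condKernel, ← mul_assoc, hX, sum_joint_Yn_Mhat]
  simp only [joint, mul_assoc, ← Finset.prod_mul_distrib, hY]

lemma toGPC_joint_eq_targetMZ_mul_condKernel (qZ : Z → ℝ) (m : Msg n R) (x : Fin n → X)
    (y : Fin n → Y) (z : Fin n → Z) (mh : Msg n R) :
    (c.toGPC W).joint qZ (condYgivenXZ W) (m, x, y, z, mh)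
      = targetMZ qZ n R (m, z) * c.condKernel W (m, z) (x, y, mh) := by
  dsimp only [GPCCode.joint, toGPC, targetMZ, condKernel]
  ring

end WTCCode

theorem tv_joint_eq_tv_margMZ_general
    (W : X → Y × Z → ℝ) (hW : ∀ x, IsPMF (W x))
    (c : WTCCode X Y Z n R) (hc : c.valid)
    (qZ : Z → ℝ) :
    tvDist (c.joint W) ((c.toGPC W).joint qZ (condYgivenXZ W))
      = tvDist (c.margMZ W) (targetMZ qZ n R) := by
  have hP : c.joint W
      = (fun a => c.margMZ W a.1 * c.condKernel W a.1 a.2) ∘ prodRegroup _ _ _ _ _ :=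
    funext fun ⟨m, x, y, z, mh⟩ => c.joint_eq_margMZ_mul_condKernel hW hc m x y z mh
  have hQ : (c.toGPC W).joint qZ (condYgivenXZ W)
      = (fun a => targetMZ qZ n R a.1 * c.condKernel W a.1 a.2) ∘ prodRegroup _ _ _ _ _ :=
    funext fun ⟨m, x, y, z, mh⟩ => c.toGPC_joint_eq_targetMZ_mul_condKernel qZ m x y z mh
  rw [hP, hQ, tvDist_comp_equiv, tvDist_mul_kernel _ _ (c.isPMF_condKernel hW hc)]

/-- **The induced distributions of a wiretap code and of its associated Gelfand-Pinsker
code are as close as the wiretap code is to its target measure.**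
For any `(n,R)`-wiretap code `c_n = (f_n, φ_n)` over the WTC `p_{Y,Z|X}` and any PMF `q_Z`
on `Z`, letting `b_n = (g_n, ψ_n)` with `g_n = P̃^{(c_n)}_{Xⁿ|Zⁿ,M}` and `ψ_n = φ_n` be the
induced code for the GPC `(q_Z, p_{Y|X,Z})`,
`‖P̃^{(c_n)} − Q̃^{(b_n)}‖_TV = ‖P̃^{(c_n)}_{M,Zⁿ} − p^U_{M_n} ⊗ q_Z^n‖_TV`. -/
theorem tv_joint_eq_tv_margMZ
    (W : X → Y × Z → ℝ) (hW : ∀ x, IsPMF (W x))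
    (hR : 0 ≤ R) (c : WTCCode X Y Z n R) (hc : c.valid)
    (qZ : Z → ℝ) (hqZ : IsPMF qZ) :
    tvDist (c.joint W) ((c.toGPC W).joint qZ (condYgivenXZ W))
      = tvDist (c.margMZ W) (targetMZ qZ n R) :=
  tv_joint_eq_tv_margMZ_general W hW c hc qZ
end
end

section
/- Let V, T, X, Y₁, Y₂, Z be finite random variables with an arbitrary joint PMF p. Then there exists a choice of U, equal either to V or to the pair (V,T), such that both I_p(V;Y₂) − I_p(V;Z) ≤ I_p(U;Y₂) − I_p(U;Z) and I_p(V,T;Y₂) − I_p(V,T;Y₁,Z) ≤ I_p(U;Y₂) − I_p(U;Y₁,Z) hold. Specifically, at least one of the conditions I_p(T;Y₂|V) − I_p(T;Y₁,Z|V) ≤ 0 or I_p(T;Y₂|V) − I_p(T;Z|V) ≥ 0 always holds; in the first case U = V satisfies both inequalities, and in the second case U = (V,T) does. -/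
set_option linter.unusedSectionVars false
set_option linter.unusedVariables false
set_option maxHeartbeats 1000000


open scoped BigOperators

noncomputable section

/-- Relative entropy `D(p‖q) = Σ_{x : p x > 0} p x * log (p x / q x)`. -/
def relEnt {Ω : Type*} [Fintype Ω] (p q : Ω → ℝ) : ℝ :=
  ∑ x, if 0 < p x then p x * Real.log (p x / q x) else 0

/-- Mutual information of a joint PMF `μ` on `A × B`: `I_μ(A;B) = D(μ ‖ μ_A ⊗ μ_B)`. -/
def mutInf {A B : Type*} [Fintype A] [Fintype B] (μ : A × B → ℝ) : ℝ :=
  relEnt μ (fun ab => (∑ b, μ (ab.1, b)) * (∑ a, μ (a, ab.2)))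

/-- Conditional mutual information `I(A;B|C)` of a joint PMF on `A × B × C`, via the chain
rule `I(A;B|C) = I(A;B,C) − I(A;C)` (which agrees with `Σ_c p_C(c) I(A;B|C=c)` for PMFs). -/
def condMutInf {A B C : Type*} [Fintype A] [Fintype B] [Fintype C]
    (μ : A × B × C → ℝ) : ℝ :=
  mutInf μ - mutInf (fun ac : A × C => ∑ b, μ (ac.1, b, ac.2))

def negEnt {Ω : Type*} [Fintype Ω] (f : Ω → ℝ) : ℝ := ∑ x, f x * Real.log (f x)

section mv
variable {α β γ δ ε : Type*} [Fintype α] [Fintype β] [Fintype γ] [Fintype δ] [Fintype ε]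

lemma mv1 (f : α → β → ℝ) : ∑ a, ∑ b, f a b = ∑ b, ∑ a, f a b := Finset.sum_comm

lemma mv2 (f : α → β → γ → ℝ) : ∑ a, ∑ b, ∑ c, f a b c = ∑ b, ∑ c, ∑ a, f a b c :=
  (mv1 fun a b => ∑ c, f a b c).trans (Finset.sum_congr rfl fun b _ => mv1 _)

lemma mv3 (f : α → β → γ → δ → ℝ) :
    ∑ a, ∑ b, ∑ c, ∑ d, f a b c d = ∑ b, ∑ c, ∑ d, ∑ a, f a b c d :=
  (mv1 fun a b => ∑ c, ∑ d, f a b c d).trans (Finset.sum_congr rfl fun b _ => mv2 _)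

lemma mv4 (f : α → β → γ → δ → ε → ℝ) :
    ∑ a, ∑ b, ∑ c, ∑ d, ∑ e, f a b c d e = ∑ b, ∑ c, ∑ d, ∑ e, ∑ a, f a b c d e :=
  (mv1 fun a b => ∑ c, ∑ d, ∑ e, f a b c d e).trans (Finset.sum_congr rfl fun b _ => mv3 _)
end mv

lemma log_lb {t : ℝ} (ht : 0 < t) : 1 - 1 / t ≤ Real.log t := by
  have h := Real.log_le_sub_one_of_pos (show (0:ℝ) < t⁻¹ by positivity)
  rw [Real.log_inv] at h
  rw [one_div]
  linarith

lemma mutInf_eq {A B : Type*} [Fintype A] [Fintype B] (μ : A × B → ℝ) (hμ : ∀ x, 0 ≤ μ x) :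
    mutInf μ = negEnt μ - negEnt (fun a => ∑ b, μ (a, b)) - negEnt (fun b => ∑ a, μ (a, b)) := by
  have key : ∀ x : A × B,
      (if 0 < μ x then μ x * Real.log (μ x / ((∑ b, μ (x.1, b)) * (∑ a, μ (a, x.2)))) else 0)
        = μ x * Real.log (μ x)
          - (μ x * Real.log (∑ b, μ (x.1, b)) + μ x * Real.log (∑ a, μ (a, x.2))) := by
    intro x
    by_cases h : 0 < μ x
    · have hx : μ (x.1, x.2) = μ x := by rw [Prod.mk.eta]
      have hA : 0 < ∑ b, μ (x.1, b) :=
        lt_of_lt_of_le h (hx ▸ Finset.single_le_sum (f := fun b => μ (x.1, b))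
          (fun i _ => hμ _) (Finset.mem_univ x.2))
      have hB : 0 < ∑ a, μ (a, x.2) :=
        lt_of_lt_of_le h (hx ▸ Finset.single_le_sum (f := fun a => μ (a, x.2))
          (fun i _ => hμ _) (Finset.mem_univ x.1))
      rw [if_pos h, Real.log_div (ne_of_gt h) (ne_of_gt (mul_pos hA hB)),
        Real.log_mul hA.ne' hB.ne']
      ring
    · have h0 : μ x = 0 := le_antisymm (not_lt.1 h) (hμ x)
      rw [if_neg h, h0]; ring
  unfold mutInf relEnt negEnt
  rw [Finset.sum_congr rfl fun x _ => key x, Finset.sum_sub_distrib, Finset.sum_add_distrib]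
  have h1 : ∑ x : A × B, μ x * Real.log (∑ b, μ (x.1, b))
      = ∑ a, (∑ b, μ (a, b)) * Real.log (∑ b, μ (a, b)) := by
    rw [Fintype.sum_prod_type]
    exact Finset.sum_congr rfl fun a _ =>
      (show ∑ y, μ (a, y) * Real.log (∑ b, μ (a, b)) = _ from (Finset.sum_mul _ _ _).symm)
  have h2 : ∑ x : A × B, μ x * Real.log (∑ a, μ (a, x.2))
      = ∑ b, (∑ a, μ (a, b)) * Real.log (∑ a, μ (a, b)) := by
    rw [Fintype.sum_prod_type_right]
    exact Finset.sum_congr rfl fun b _ =>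
      (show ∑ x, μ (x, b) * Real.log (∑ a, μ (a, b)) = _ from (Finset.sum_mul _ _ _).symm)
  rw [h1, h2]; ring

lemma negEnt_submod {A B C : Type*} [Fintype A] [Fintype B] [Fintype C]
    (q : A × B × C → ℝ) (hq : ∀ x, 0 ≤ q x) :
    negEnt (fun ac : A × C => ∑ b, q (ac.1, b, ac.2)) +
      negEnt (fun bc : B × C => ∑ a, q (a, bc.1, bc.2)) ≤
    negEnt q + negEnt (fun c : C => ∑ a, ∑ b, q (a, b, c)) := by
  have eq : negEnt q = ∑ c, ∑ a, ∑ b, q (a, b, c) * Real.log (q (a, b, c)) := by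
    unfold negEnt
    calc ∑ x : A × B × C, q x * Real.log (q x)
        = ∑ a, ∑ y : B × C, q (a, y) * Real.log (q (a, y)) := Fintype.sum_prod_type _
      _ = ∑ a, ∑ b, ∑ c, q (a, b, c) * Real.log (q (a, b, c)) :=
          Finset.sum_congr rfl fun a _ => Fintype.sum_prod_type _
      _ = ∑ a, ∑ c, ∑ b, q (a, b, c) * Real.log (q (a, b, c)) :=
          Finset.sum_congr rfl fun a _ => mv1 _
      _ = ∑ c, ∑ a, ∑ b, q (a, b, c) * Real.log (q (a, b, c)) := mv1 _
  have eAC : negEnt (fun ac : A × C => ∑ b, q (ac.1, b, ac.2))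
      = ∑ c, ∑ a, ∑ b, q (a, b, c) * Real.log (∑ b', q (a, b', c)) := by
    unfold negEnt
    calc ∑ x : A × C, (∑ b, q (x.1, b, x.2)) * Real.log (∑ b, q (x.1, b, x.2))
        = ∑ a, ∑ c, (∑ b, q (a, b, c)) * Real.log (∑ b, q (a, b, c)) := Fintype.sum_prod_type _
      _ = ∑ c, ∑ a, (∑ b, q (a, b, c)) * Real.log (∑ b, q (a, b, c)) := mv1 _
      _ = ∑ c, ∑ a, ∑ b, q (a, b, c) * Real.log (∑ b', q (a, b', c)) :=
          Finset.sum_congr rfl fun c _ => Finset.sum_congr rfl fun a _ => by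
            rw [Finset.sum_mul]
  have eBC : negEnt (fun bc : B × C => ∑ a, q (a, bc.1, bc.2))
      = ∑ c, ∑ a, ∑ b, q (a, b, c) * Real.log (∑ a', q (a', b, c)) := by
    unfold negEnt
    calc ∑ x : B × C, (∑ a, q (a, x.1, x.2)) * Real.log (∑ a, q (a, x.1, x.2))
        = ∑ b, ∑ c, (∑ a, q (a, b, c)) * Real.log (∑ a, q (a, b, c)) := Fintype.sum_prod_type _
      _ = ∑ c, ∑ b, (∑ a, q (a, b, c)) * Real.log (∑ a, q (a, b, c)) := mv1 _
      _ = ∑ c, ∑ b, ∑ a, q (a, b, c) * Real.log (∑ a', q (a', b, c)) :=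
          Finset.sum_congr rfl fun c _ => Finset.sum_congr rfl fun b _ => by
            rw [Finset.sum_mul]
      _ = ∑ c, ∑ a, ∑ b, q (a, b, c) * Real.log (∑ a', q (a', b, c)) :=
          Finset.sum_congr rfl fun c _ => mv1 _
  have eC : negEnt (fun c : C => ∑ a, ∑ b, q (a, b, c))
      = ∑ c, ∑ a, ∑ b, q (a, b, c) * Real.log (∑ a', ∑ b', q (a', b', c)) := by
    unfold negEnt
    refine Finset.sum_congr rfl fun c _ => ?_
    show (∑ a, ∑ b, q (a, b, c)) * Real.log (∑ a, ∑ b, q (a, b, c)) = _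
    rw [Finset.sum_mul]
    exact Finset.sum_congr rfl fun a _ => by rw [Finset.sum_mul]
  rw [eq, eAC, eBC, eC, ← Finset.sum_add_distrib, ← Finset.sum_add_distrib]
  refine Finset.sum_le_sum fun c _ => ?_
  by_cases hc : 0 < ∑ a, ∑ b, q (a, b, c)
  · -- main case
    set mA : A → ℝ := fun a => ∑ b', q (a, b', c) with hmA
    set mB : B → ℝ := fun b => ∑ a', q (a', b, c) with hmB
    set mC : ℝ := ∑ a', ∑ b', q (a', b', c) with hmC
    have hmCalt : mC = ∑ a, ∑ b, q (a, b, c) := rfl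
    have hmAnn : ∀ a, 0 ≤ mA a := fun a => Finset.sum_nonneg fun _ _ => hq _
    have hmBnn : ∀ b, 0 ≤ mB b := fun b => Finset.sum_nonneg fun _ _ => hq _
    have hub : ∀ a b, q (a, b, c) * Real.log (mA a) + q (a, b, c) * Real.log (mB b)
        + (if 0 < q (a, b, c) then q (a, b, c) - mA a * mB b / mC else 0)
        ≤ q (a, b, c) * Real.log (q (a, b, c)) + q (a, b, c) * Real.log mC := by
      intro a b
      by_cases h : 0 < q (a, b, c)
      · have hA : 0 < mA a := lt_of_lt_of_le h
          (Finset.single_le_sum (f := fun b' => q (a, b', c)) (fun _ _ => hq _) (Finset.mem_univ b))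
        have hB : 0 < mB b := lt_of_lt_of_le h
          (Finset.single_le_sum (f := fun a' => q (a', b, c)) (fun _ _ => hq _) (Finset.mem_univ a))
        rw [if_pos h]
        have ht : 0 < q (a, b, c) * mC / (mA a * mB b) := by positivity
        have h3 : q (a, b, c) * (1 - 1 / (q (a, b, c) * mC / (mA a * mB b)))
            ≤ q (a, b, c) * Real.log (q (a, b, c) * mC / (mA a * mB b)) :=
          mul_le_mul_of_nonneg_left (log_lb ht) (hq _)
        have hlogt : Real.log (q (a, b, c) * mC / (mA a * mB b))
            = Real.log (q (a, b, c)) + Real.log mC - Real.log (mA a) - Real.log (mB b) := by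
          rw [Real.log_div (by positivity) (by positivity), Real.log_mul h.ne' hc.ne',
            Real.log_mul hA.ne' hB.ne']
          ring
        have h2 : q (a, b, c) * (1 - 1 / (q (a, b, c) * mC / (mA a * mB b)))
            = q (a, b, c) - mA a * mB b / mC := by
          field_simp
        have h4 : q (a, b, c) * (Real.log (q (a, b, c)) + Real.log mC - Real.log (mA a)
            - Real.log (mB b)) = q (a, b, c) * Real.log (q (a, b, c))
            + q (a, b, c) * Real.log mC - q (a, b, c) * Real.log (mA a)
            - q (a, b, c) * Real.log (mB b) := by ring
        rw [hlogt, h4, h2] at h3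
        linarith
      · have h0 : q (a, b, c) = 0 := le_antisymm (not_lt.1 h) (hq _)
        rw [if_neg h, h0]
        simp
    have S1 : ∑ a, ∑ b, (q (a, b, c) * Real.log (mA a) + q (a, b, c) * Real.log (mB b)
        + (if 0 < q (a, b, c) then q (a, b, c) - mA a * mB b / mC else 0))
        ≤ ∑ a, ∑ b, (q (a, b, c) * Real.log (q (a, b, c)) + q (a, b, c) * Real.log mC) :=
      Finset.sum_le_sum fun a _ => Finset.sum_le_sum fun b _ => hub a b
    -- positivity of the ite-sum
    have T1 : ∑ a, ∑ b, (if 0 < q (a, b, c) then q (a, b, c) else 0) = mC := by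
      rw [hmCalt]
      refine Finset.sum_congr rfl fun a _ => Finset.sum_congr rfl fun b _ => ?_
      by_cases h : 0 < q (a, b, c)
      · rw [if_pos h]
      · rw [if_neg h, le_antisymm (not_lt.1 h) (hq _)]
    have T2 : ∑ a, ∑ b, (if 0 < q (a, b, c) then mA a * mB b / mC else 0) ≤ mC := by
      have step : ∑ a, ∑ b, (if 0 < q (a, b, c) then mA a * mB b / mC else 0)
          ≤ ∑ a, ∑ b, mA a * mB b / mC := by
        refine Finset.sum_le_sum fun a _ => Finset.sum_le_sum fun b _ => ?_
        by_cases h : 0 < q (a, b, c)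
        · rw [if_pos h]
        · rw [if_neg h]
          exact div_nonneg (mul_nonneg (hmAnn a) (hmBnn b)) (le_of_lt hc)
      have val : ∑ a, ∑ b, mA a * mB b / mC = mC := by
        have hB : ∑ b, mB b = mC := by rw [hmC]; exact mv1 _
        have : ∀ a, ∑ b, mA a * mB b / mC = mA a * mC / mC := by
          intro a
          rw [← Finset.sum_div, ← Finset.mul_sum, hB]
        rw [Finset.sum_congr rfl fun a _ => this a, ← Finset.sum_div, ← Finset.sum_mul]
        rw [show (∑ a, mA a) = mC from rfl]
        field_simp
      linarith [val ▸ step]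
    have Tsplit : ∑ a, ∑ b, (if 0 < q (a, b, c) then q (a, b, c) - mA a * mB b / mC else 0)
        = (∑ a, ∑ b, (if 0 < q (a, b, c) then q (a, b, c) else 0))
          - ∑ a, ∑ b, (if 0 < q (a, b, c) then mA a * mB b / mC else 0) := by
      rw [← Finset.sum_sub_distrib]
      refine Finset.sum_congr rfl fun a _ => ?_
      rw [← Finset.sum_sub_distrib]
      refine Finset.sum_congr rfl fun b _ => ?_
      split <;> ring
    have S2 : 0 ≤ ∑ a, ∑ b, (if 0 < q (a, b, c) then q (a, b, c) - mA a * mB b / mC else 0) := by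
      rw [Tsplit, T1]; linarith
    have E1 : ∑ a, ∑ b, (q (a, b, c) * Real.log (mA a) + q (a, b, c) * Real.log (mB b)
        + (if 0 < q (a, b, c) then q (a, b, c) - mA a * mB b / mC else 0))
        = (∑ a, ∑ b, q (a, b, c) * Real.log (mA a))
          + (∑ a, ∑ b, q (a, b, c) * Real.log (mB b))
          + ∑ a, ∑ b, (if 0 < q (a, b, c) then q (a, b, c) - mA a * mB b / mC else 0) := by
      rw [← Finset.sum_add_distrib, ← Finset.sum_add_distrib]
      refine Finset.sum_congr rfl fun a _ => ?_
      rw [← Finset.sum_add_distrib, ← Finset.sum_add_distrib]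
    have E2 : ∑ a, ∑ b, (q (a, b, c) * Real.log (q (a, b, c)) + q (a, b, c) * Real.log mC)
        = (∑ a, ∑ b, q (a, b, c) * Real.log (q (a, b, c)))
          + ∑ a, ∑ b, q (a, b, c) * Real.log mC := by
      rw [← Finset.sum_add_distrib]
      refine Finset.sum_congr rfl fun a _ => ?_
      rw [← Finset.sum_add_distrib]
    rw [E1, E2] at S1
    linarith
  · -- degenerate case: all q (a,b,c) = 0
    have hq0 : ∀ a b, q (a, b, c) = 0 := by
      intro a b
      have h1 : q (a, b, c) ≤ ∑ b', q (a, b', c) :=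
        Finset.single_le_sum (f := fun b' => q (a, b', c)) (fun _ _ => hq _) (Finset.mem_univ b)
      have h2 : ∑ b', q (a, b', c) ≤ ∑ a', ∑ b', q (a', b', c) :=
        Finset.single_le_sum (f := fun a' => ∑ b', q (a', b', c))
          (fun _ _ => Finset.sum_nonneg fun _ _ => hq _) (Finset.mem_univ a)
      have := not_lt.1 hc
      exact le_antisymm (by linarith) (hq _)
    simp [hq0]


section reorders
variable {V T Xv Y1 Y2 Z : Type}
  [Fintype V] [Fintype T] [Fintype Xv] [Fintype Y1] [Fintype Y2] [Fintype Z]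
  (p : V × T × Xv × Y1 × Y2 × Z → ℝ)

lemma R1 (v : V) : ∑ y2, ∑ t, ∑ x, ∑ y1, ∑ z, p (v, t, x, y1, y2, z)
    = ∑ t, ∑ x, ∑ y1, ∑ y2, ∑ z, p (v, t, x, y1, y2, z) :=
  mv3 fun y2 t x y1 => ∑ z, p (v, t, x, y1, y2, z)

lemma R2 (v : V) : ∑ z, ∑ t, ∑ x, ∑ y1, ∑ y2, p (v, t, x, y1, y2, z)
    = ∑ t, ∑ x, ∑ y1, ∑ y2, ∑ z, p (v, t, x, y1, y2, z) :=
  mv4 fun z t x y1 y2 => p (v, t, x, y1, y2, z)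

lemma R3 (v : V) : ∑ q : Y1 × Z, ∑ t, ∑ x, ∑ y2, p (v, t, x, q.1, y2, q.2)
    = ∑ t, ∑ x, ∑ y1, ∑ y2, ∑ z, p (v, t, x, y1, y2, z) :=
  calc ∑ q : Y1 × Z, ∑ t, ∑ x, ∑ y2, p (v, t, x, q.1, y2, q.2)
      = ∑ y1, ∑ z, ∑ t, ∑ x, ∑ y2, p (v, t, x, y1, y2, z) := Fintype.sum_prod_type _
    _ = ∑ y1, ∑ t, ∑ x, ∑ y2, ∑ z, p (v, t, x, y1, y2, z) :=
        Finset.sum_congr rfl fun y1 _ => mv3 fun z t x y2 => p (v, t, x, y1, y2, z)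
    _ = ∑ t, ∑ x, ∑ y1, ∑ y2, ∑ z, p (v, t, x, y1, y2, z) :=
        mv2 fun y1 t x => ∑ y2, ∑ z, p (v, t, x, y1, y2, z)

lemma R4 (v : V) (t : T) : ∑ y2, ∑ x, ∑ y1, ∑ z, p (v, t, x, y1, y2, z)
    = ∑ x, ∑ y1, ∑ y2, ∑ z, p (v, t, x, y1, y2, z) :=
  mv2 fun y2 x y1 => ∑ z, p (v, t, x, y1, y2, z)

lemma R5 (v : V) (t : T) : ∑ q : Y1 × Z, ∑ x, ∑ y2, p (v, t, x, q.1, y2, q.2)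
    = ∑ x, ∑ y1, ∑ y2, ∑ z, p (v, t, x, y1, y2, z) :=
  calc ∑ q : Y1 × Z, ∑ x, ∑ y2, p (v, t, x, q.1, y2, q.2)
      = ∑ y1, ∑ z, ∑ x, ∑ y2, p (v, t, x, y1, y2, z) := Fintype.sum_prod_type _
    _ = ∑ y1, ∑ x, ∑ y2, ∑ z, p (v, t, x, y1, y2, z) :=
        Finset.sum_congr rfl fun y1 _ => mv2 fun z x y2 => p (v, t, x, y1, y2, z)
    _ = ∑ x, ∑ y1, ∑ y2, ∑ z, p (v, t, x, y1, y2, z) :=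
        mv1 fun y1 x => ∑ y2, ∑ z, p (v, t, x, y1, y2, z)

lemma R6 (v : V) (t : T) : ∑ z, ∑ x, ∑ y1, ∑ y2, p (v, t, x, y1, y2, z)
    = ∑ x, ∑ y1, ∑ y2, ∑ z, p (v, t, x, y1, y2, z) :=
  mv3 fun z x y1 y2 => p (v, t, x, y1, y2, z)

lemma R7 (v : V) (t : T) (z : Z) : ∑ y1, ∑ x, ∑ y2, p (v, t, x, y1, y2, z)
    = ∑ x, ∑ y1, ∑ y2, p (v, t, x, y1, y2, z) :=
  mv1 fun y1 x => ∑ y2, p (v, t, x, y1, y2, z)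

lemma R8 (v : V) (z : Z) : ∑ t, ∑ y1, ∑ x, ∑ y2, p (v, t, x, y1, y2, z)
    = ∑ t, ∑ x, ∑ y1, ∑ y2, p (v, t, x, y1, y2, z) :=
  Finset.sum_congr rfl fun t _ => mv1 fun y1 x => ∑ y2, p (v, t, x, y1, y2, z)

lemma HT7 (t : T) : ∑ q : Y2 × V, ∑ x, ∑ y1, ∑ z, p (q.2, t, x, y1, q.1, z)
    = ∑ v, ∑ y2, ∑ x, ∑ y1, ∑ z, p (v, t, x, y1, y2, z) := by
  rw [Fintype.sum_prod_type]
  exact Finset.sum_comm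

lemma HT8 (t : T) : ∑ q : (Y1 × Z) × V, ∑ x, ∑ y2, p (q.2, t, x, q.1.1, y2, q.1.2)
    = ∑ v, ∑ q : Y1 × Z, ∑ x, ∑ y2, p (v, t, x, q.1, y2, q.2) := by
  rw [Fintype.sum_prod_type]
  exact Finset.sum_comm

lemma HT9 (t : T) : ∑ q : Z × V, ∑ x, ∑ y1, ∑ y2, p (q.2, t, x, y1, y2, q.1)
    = ∑ v, ∑ z, ∑ x, ∑ y1, ∑ y2, p (v, t, x, y1, y2, z) := by
  rw [Fintype.sum_prod_type]
  exact Finset.sum_comm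

end reorders

variable {V T Xv Y1 Y2 Z : Type}
  [Fintype V] [Fintype T] [Fintype Xv] [Fintype Y1] [Fintype Y2] [Fintype Z]

section Ls
variable (p : V × T × Xv × Y1 × Y2 × Z → ℝ)

lemma L1 (hp0 : ∀ x, 0 ≤ p x) : mutInf (fun vy2 : V × Y2 => ∑ t, ∑ x, ∑ y1, ∑ z, p (vy2.1, t, x, y1, vy2.2, z)) = negEnt (fun vy2 : V × Y2 => ∑ t, ∑ x, ∑ y1, ∑ z, p (vy2.1, t, x, y1, vy2.2, z)) - negEnt (fun v : V => ∑ t, ∑ x, ∑ y1, ∑ y2, ∑ z, p (v, t, x, y1, y2, z)) - negEnt (fun y2 : Y2 => ∑ v, ∑ t, ∑ x, ∑ y1, ∑ z, p (v, t, x, y1, y2, z)) := by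
  rw [mutInf_eq (fun vy2 : V × Y2 => ∑ t, ∑ x, ∑ y1, ∑ z, p (vy2.1, t, x, y1, vy2.2, z)) (fun _ => Finset.sum_nonneg fun _ _ => Finset.sum_nonneg fun _ _ => Finset.sum_nonneg fun _ _ => Finset.sum_nonneg fun _ _ => hp0 _)]
  have hA : negEnt (fun a : V => ∑ b : Y2, (fun vy2 : V × Y2 => ∑ t, ∑ x, ∑ y1, ∑ z, p (vy2.1, t, x, y1, vy2.2, z)) (a, b)) = negEnt (fun v : V => ∑ t, ∑ x, ∑ y1, ∑ y2, ∑ z, p (v, t, x, y1, y2, z)) :=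
    congrArg negEnt (funext fun v => R1 p v)
  have hB : negEnt (fun b : Y2 => ∑ a : V, (fun vy2 : V × Y2 => ∑ t, ∑ x, ∑ y1, ∑ z, p (vy2.1, t, x, y1, vy2.2, z)) (a, b)) = negEnt (fun y2 : Y2 => ∑ v, ∑ t, ∑ x, ∑ y1, ∑ z, p (v, t, x, y1, y2, z)) := rfl
  rw [hA, hB]

lemma L2 (hp0 : ∀ x, 0 ≤ p x) : mutInf (fun vz : V × Z => ∑ t, ∑ x, ∑ y1, ∑ y2, p (vz.1, t, x, y1, y2, vz.2)) = negEnt (fun vz : V × Z => ∑ t, ∑ x, ∑ y1, ∑ y2, p (vz.1, t, x, y1, y2, vz.2)) - negEnt (fun v : V => ∑ t, ∑ x, ∑ y1, ∑ y2, ∑ z, p (v, t, x, y1, y2, z)) - negEnt (fun z : Z => ∑ v, ∑ t, ∑ x, ∑ y1, ∑ y2, p (v, t, x, y1, y2, z)) := by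
  rw [mutInf_eq (fun vz : V × Z => ∑ t, ∑ x, ∑ y1, ∑ y2, p (vz.1, t, x, y1, y2, vz.2)) (fun _ => Finset.sum_nonneg fun _ _ => Finset.sum_nonneg fun _ _ => Finset.sum_nonneg fun _ _ => Finset.sum_nonneg fun _ _ => hp0 _)]
  have hA : negEnt (fun a : V => ∑ b : Z, (fun vz : V × Z => ∑ t, ∑ x, ∑ y1, ∑ y2, p (vz.1, t, x, y1, y2, vz.2)) (a, b)) = negEnt (fun v : V => ∑ t, ∑ x, ∑ y1, ∑ y2, ∑ z, p (v, t, x, y1, y2, z)) :=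
    congrArg negEnt (funext fun v => R2 p v)
  have hB : negEnt (fun b : Z => ∑ a : V, (fun vz : V × Z => ∑ t, ∑ x, ∑ y1, ∑ y2, p (vz.1, t, x, y1, y2, vz.2)) (a, b)) = negEnt (fun z : Z => ∑ v, ∑ t, ∑ x, ∑ y1, ∑ y2, p (v, t, x, y1, y2, z)) := rfl
  rw [hA, hB]

lemma L3 (hp0 : ∀ x, 0 ≤ p x) : mutInf (fun vy1z : V × Y1 × Z => ∑ t, ∑ x, ∑ y2, p (vy1z.1, t, x, vy1z.2.1, y2, vy1z.2.2)) = negEnt (fun vy1z : V × Y1 × Z => ∑ t, ∑ x, ∑ y2, p (vy1z.1, t, x, vy1z.2.1, y2, vy1z.2.2)) - negEnt (fun v : V => ∑ t, ∑ x, ∑ y1, ∑ y2, ∑ z, p (v, t, x, y1, y2, z)) - negEnt (fun a : Y1 × Z => ∑ v, ∑ t, ∑ x, ∑ y2, p (v, t, x, a.1, y2, a.2)) := by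
  rw [mutInf_eq (fun vy1z : V × Y1 × Z => ∑ t, ∑ x, ∑ y2, p (vy1z.1, t, x, vy1z.2.1, y2, vy1z.2.2)) (fun _ => Finset.sum_nonneg fun _ _ => Finset.sum_nonneg fun _ _ => Finset.sum_nonneg fun _ _ => hp0 _)]
  have hA : negEnt (fun a : V => ∑ b : Y1 × Z, (fun vy1z : V × Y1 × Z => ∑ t, ∑ x, ∑ y2, p (vy1z.1, t, x, vy1z.2.1, y2, vy1z.2.2)) (a, b)) = negEnt (fun v : V => ∑ t, ∑ x, ∑ y1, ∑ y2, ∑ z, p (v, t, x, y1, y2, z)) :=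
    congrArg negEnt (funext fun v => R3 p v)
  have hB : negEnt (fun b : Y1 × Z => ∑ a : V, (fun vy1z : V × Y1 × Z => ∑ t, ∑ x, ∑ y2, p (vy1z.1, t, x, vy1z.2.1, y2, vy1z.2.2)) (a, b)) = negEnt (fun a : Y1 × Z => ∑ v, ∑ t, ∑ x, ∑ y2, p (v, t, x, a.1, y2, a.2)) := rfl
  rw [hA, hB]

lemma L4 (hp0 : ∀ x, 0 ≤ p x) : mutInf (fun vty2 : (V × T) × Y2 => ∑ x, ∑ y1, ∑ z, p (vty2.1.1, vty2.1.2, x, y1, vty2.2, z)) = negEnt (fun vty2 : (V × T) × Y2 => ∑ x, ∑ y1, ∑ z, p (vty2.1.1, vty2.1.2, x, y1, vty2.2, z)) - negEnt (fun a : V × T => ∑ x, ∑ y1, ∑ y2, ∑ z, p (a.1, a.2, x, y1, y2, z)) - negEnt (fun y2 : Y2 => ∑ v, ∑ t, ∑ x, ∑ y1, ∑ z, p (v, t, x, y1, y2, z)) := by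
  rw [mutInf_eq (fun vty2 : (V × T) × Y2 => ∑ x, ∑ y1, ∑ z, p (vty2.1.1, vty2.1.2, x, y1, vty2.2, z)) (fun _ => Finset.sum_nonneg fun _ _ => Finset.sum_nonneg fun _ _ => Finset.sum_nonneg fun _ _ => hp0 _)]
  have hA : negEnt (fun a : V × T => ∑ b : Y2, (fun vty2 : (V × T) × Y2 => ∑ x, ∑ y1, ∑ z, p (vty2.1.1, vty2.1.2, x, y1, vty2.2, z)) (a, b)) = negEnt (fun a : V × T => ∑ x, ∑ y1, ∑ y2, ∑ z, p (a.1, a.2, x, y1, y2, z)) :=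
    congrArg negEnt (funext fun a => R4 p a.1 a.2)
  have hB : negEnt (fun b : Y2 => ∑ a : V × T, (fun vty2 : (V × T) × Y2 => ∑ x, ∑ y1, ∑ z, p (vty2.1.1, vty2.1.2, x, y1, vty2.2, z)) (a, b)) = negEnt (fun y2 : Y2 => ∑ v, ∑ t, ∑ x, ∑ y1, ∑ z, p (v, t, x, y1, y2, z)) :=
    congrArg negEnt (funext fun y2 => Fintype.sum_prod_type _)
  rw [hA, hB]

lemma L5 (hp0 : ∀ x, 0 ≤ p x) : mutInf (fun vty1z : (V × T) × Y1 × Z => ∑ x, ∑ y2, p (vty1z.1.1, vty1z.1.2, x, vty1z.2.1, y2, vty1z.2.2)) = negEnt (fun vty1z : (V × T) × Y1 × Z => ∑ x, ∑ y2, p (vty1z.1.1, vty1z.1.2, x, vty1z.2.1, y2, vty1z.2.2)) - negEnt (fun a : V × T => ∑ x, ∑ y1, ∑ y2, ∑ z, p (a.1, a.2, x, y1, y2, z)) - negEnt (fun a : Y1 × Z => ∑ v, ∑ t, ∑ x, ∑ y2, p (v, t, x, a.1, y2, a.2)) := by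
  rw [mutInf_eq (fun vty1z : (V × T) × Y1 × Z => ∑ x, ∑ y2, p (vty1z.1.1, vty1z.1.2, x, vty1z.2.1, y2, vty1z.2.2)) (fun _ => Finset.sum_nonneg fun _ _ => Finset.sum_nonneg fun _ _ => hp0 _)]
  have hA : negEnt (fun a : V × T => ∑ b : Y1 × Z, (fun vty1z : (V × T) × Y1 × Z => ∑ x, ∑ y2, p (vty1z.1.1, vty1z.1.2, x, vty1z.2.1, y2, vty1z.2.2)) (a, b)) = negEnt (fun a : V × T => ∑ x, ∑ y1, ∑ y2, ∑ z, p (a.1, a.2, x, y1, y2, z)) :=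
    congrArg negEnt (funext fun a => R5 p a.1 a.2)
  have hB : negEnt (fun b : Y1 × Z => ∑ a : V × T, (fun vty1z : (V × T) × Y1 × Z => ∑ x, ∑ y2, p (vty1z.1.1, vty1z.1.2, x, vty1z.2.1, y2, vty1z.2.2)) (a, b)) = negEnt (fun a : Y1 × Z => ∑ v, ∑ t, ∑ x, ∑ y2, p (v, t, x, a.1, y2, a.2)) :=
    congrArg negEnt (funext fun q => Fintype.sum_prod_type _)
  rw [hA, hB]

lemma L6 (hp0 : ∀ x, 0 ≤ p x) : mutInf (fun vtz : (V × T) × Z => ∑ x, ∑ y1, ∑ y2, p (vtz.1.1, vtz.1.2, x, y1, y2, vtz.2)) = negEnt (fun vtz : (V × T) × Z => ∑ x, ∑ y1, ∑ y2, p (vtz.1.1, vtz.1.2, x, y1, y2, vtz.2)) - negEnt (fun a : V × T => ∑ x, ∑ y1, ∑ y2, ∑ z, p (a.1, a.2, x, y1, y2, z)) - negEnt (fun z : Z => ∑ v, ∑ t, ∑ x, ∑ y1, ∑ y2, p (v, t, x, y1, y2, z)) := by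
  rw [mutInf_eq (fun vtz : (V × T) × Z => ∑ x, ∑ y1, ∑ y2, p (vtz.1.1, vtz.1.2, x, y1, y2, vtz.2)) (fun _ => Finset.sum_nonneg fun _ _ => Finset.sum_nonneg fun _ _ => Finset.sum_nonneg fun _ _ => hp0 _)]
  have hA : negEnt (fun a : V × T => ∑ b : Z, (fun vtz : (V × T) × Z => ∑ x, ∑ y1, ∑ y2, p (vtz.1.1, vtz.1.2, x, y1, y2, vtz.2)) (a, b)) = negEnt (fun a : V × T => ∑ x, ∑ y1, ∑ y2, ∑ z, p (a.1, a.2, x, y1, y2, z)) :=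
    congrArg negEnt (funext fun a => R6 p a.1 a.2)
  have hB : negEnt (fun b : Z => ∑ a : V × T, (fun vtz : (V × T) × Z => ∑ x, ∑ y1, ∑ y2, p (vtz.1.1, vtz.1.2, x, y1, y2, vtz.2)) (a, b)) = negEnt (fun z : Z => ∑ v, ∑ t, ∑ x, ∑ y1, ∑ y2, p (v, t, x, y1, y2, z)) :=
    congrArg negEnt (funext fun z => Fintype.sum_prod_type _)
  rw [hA, hB]

lemma L7 (hp0 : ∀ x, 0 ≤ p x) : condMutInf (fun ty2v : T × Y2 × V => ∑ x, ∑ y1, ∑ z, p (ty2v.2.2, ty2v.1, x, y1, ty2v.2.1, z)) = negEnt (fun vty2 : (V × T) × Y2 => ∑ x, ∑ y1, ∑ z, p (vty2.1.1, vty2.1.2, x, y1, vty2.2, z)) - negEnt (fun vy2 : V × Y2 => ∑ t, ∑ x, ∑ y1, ∑ z, p (vy2.1, t, x, y1, vy2.2, z)) - (negEnt (fun a : V × T => ∑ x, ∑ y1, ∑ y2, ∑ z, p (a.1, a.2, x, y1, y2, z)) - negEnt (fun v : V => ∑ t, ∑ x, ∑ y1, ∑ y2, ∑ z, p (v, t,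 x, y1, y2, z))) := by
  unfold condMutInf
  rw [mutInf_eq (fun ty2v : T × Y2 × V => ∑ x, ∑ y1, ∑ z, p (ty2v.2.2, ty2v.1, x, y1, ty2v.2.1, z)) (fun _ => Finset.sum_nonneg fun _ _ => Finset.sum_nonneg fun _ _ => Finset.sum_nonneg fun _ _ => hp0 _)]
  rw [mutInf_eq (fun ac : T × V => ∑ b : Y2, (fun ty2v : T × Y2 × V => ∑ x, ∑ y1, ∑ z, p (ty2v.2.2, ty2v.1, x, y1, ty2v.2.1, z)) (ac.1, b, ac.2)) (fun _ => Finset.sum_nonneg fun _ _ => Finset.sum_nonneg fun _ _ => Finset.sum_nonneg fun _ _ => Finset.sum_nonneg fun _ _ => hp0 _)]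
  have hcancel : negEnt (fun a : T => ∑ b : Y2 × V, (fun ty2v : T × Y2 × V => ∑ x, ∑ y1, ∑ z, p (ty2v.2.2, ty2v.1, x, y1, ty2v.2.1, z)) (a, b))
      = negEnt (fun a : T => ∑ b : V, (fun ac : T × V => ∑ b : Y2, (fun ty2v : T × Y2 × V => ∑ x, ∑ y1, ∑ z, p (ty2v.2.2, ty2v.1, x, y1, ty2v.2.1, z)) (ac.1, b, ac.2)) (a, b)) :=
    congrArg negEnt (funext fun t => HT7 p t)
  have hmu : negEnt (fun ty2v : T × Y2 × V => ∑ x, ∑ y1, ∑ z, p (ty2v.2.2, ty2v.1, x, y1, ty2v.2.1, z)) = negEnt (fun vty2 : (V × T) × Y2 => ∑ x, ∑ y1, ∑ z, p (vty2.1.1, vty2.1.2, x, y1, vty2.2, z)) := by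
    unfold negEnt
    exact Fintype.sum_equiv (⟨fun x : T × Y2 × V => ((x.2.2, x.1), x.2.1), fun y : (V × T) × Y2 => (y.1.2, (y.2, y.1.1)), fun _ => rfl, fun _ => rfl⟩ : T × Y2 × V ≃ (V × T) × Y2) _ _ fun x => rfl
  have hB : negEnt (fun b : Y2 × V => ∑ a : T, (fun ty2v : T × Y2 × V => ∑ x, ∑ y1, ∑ z, p (ty2v.2.2, ty2v.1, x, y1, ty2v.2.1, z)) (a, b)) = negEnt (fun vy2 : V × Y2 => ∑ t, ∑ x, ∑ y1, ∑ z, p (vy2.1, t, x, y1, vy2.2, z)) := by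
    unfold negEnt
    exact Fintype.sum_equiv (Equiv.prodComm (Y2) V) _ _ fun x => rfl
  have hnu : negEnt (fun ac : T × V => ∑ b : Y2, (fun ty2v : T × Y2 × V => ∑ x, ∑ y1, ∑ z, p (ty2v.2.2, ty2v.1, x, y1, ty2v.2.1, z)) (ac.1, b, ac.2)) = negEnt (fun a : V × T => ∑ x, ∑ y1, ∑ y2, ∑ z, p (a.1, a.2, x, y1, y2, z)) := by
    have h1 : negEnt (fun ac : T × V => ∑ b : Y2, (fun ty2v : T × Y2 × V => ∑ x, ∑ y1, ∑ z, p (ty2v.2.2, ty2v.1, x, y1, ty2v.2.1, z)) (ac.1, b, ac.2))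
        = negEnt (fun ac : T × V =>
            (fun a : V × T => ∑ x, ∑ y1, ∑ y2, ∑ z, p (a.1, a.2, x, y1, y2, z)) (ac.2, ac.1)) :=
      congrArg negEnt (funext fun ac => R4 p ac.2 ac.1)
    rw [h1]
    unfold negEnt
    exact Fintype.sum_equiv (Equiv.prodComm T V) _ _ fun x => rfl
  have hAnu : negEnt (fun b : V => ∑ a : T, (fun ac : T × V => ∑ b : Y2, (fun ty2v : T × Y2 × V => ∑ x, ∑ y1, ∑ z, p (ty2v.2.2, ty2v.1, x, y1, ty2v.2.1, z)) (ac.1, b, ac.2)) (a, b)) = negEnt (fun v : V => ∑ t, ∑ x, ∑ y1, ∑ y2, ∑ z, p (v, t, x, y1, y2, z)) :=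
    congrArg negEnt (funext fun v => Finset.sum_congr rfl fun t _ => R4 p v t)
  rw [hcancel, hmu, hB, hnu, hAnu]
  ring

lemma L8 (hp0 : ∀ x, 0 ≤ p x) : condMutInf (fun ty1zv : T × (Y1 × Z) × V => ∑ x, ∑ y2, p (ty1zv.2.2, ty1zv.1, x, ty1zv.2.1.1, y2, ty1zv.2.1.2)) = negEnt (fun vty1z : (V × T) × Y1 × Z => ∑ x, ∑ y2, p (vty1z.1.1, vty1z.1.2, x, vty1z.2.1, y2, vty1z.2.2)) - negEnt (fun vy1z : V × Y1 × Z => ∑ t, ∑ x, ∑ y2, p (vy1z.1, t, x, vy1z.2.1, y2, vy1z.2.2)) - (negEnt (fun a : V × T => ∑ x, ∑ y1, ∑ y2, ∑ z, p (a.1, a.2, x, y1, y2, z)) - negEnt (fun v : V => ∑ t, ∑ x, ∑ y1, ∑ y2, ∑ z, p (v, t, x, y1, y2, z))) := by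
  unfold condMutInf
  rw [mutInf_eq (fun ty1zv : T × (Y1 × Z) × V => ∑ x, ∑ y2, p (ty1zv.2.2, ty1zv.1, x, ty1zv.2.1.1, y2, ty1zv.2.1.2)) (fun _ => Finset.sum_nonneg fun _ _ => Finset.sum_nonneg fun _ _ => hp0 _)]
  rw [mutInf_eq (fun ac : T × V => ∑ b : Y1 × Z, (fun ty1zv : T × (Y1 × Z) × V => ∑ x, ∑ y2, p (ty1zv.2.2, ty1zv.1, x, ty1zv.2.1.1, y2, ty1zv.2.1.2)) (ac.1, b, ac.2)) (fun _ => Finset.sum_nonneg fun _ _ => Finset.sum_nonneg fun _ _ => Finset.sum_nonneg fun _ _ => hp0 _)]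
  have hcancel : negEnt (fun a : T => ∑ b : (Y1 × Z) × V, (fun ty1zv : T × (Y1 × Z) × V => ∑ x, ∑ y2, p (ty1zv.2.2, ty1zv.1, x, ty1zv.2.1.1, y2, ty1zv.2.1.2)) (a, b))
      = negEnt (fun a : T => ∑ b : V, (fun ac : T × V => ∑ b : Y1 × Z, (fun ty1zv : T × (Y1 × Z) × V => ∑ x, ∑ y2, p (ty1zv.2.2, ty1zv.1, x, ty1zv.2.1.1, y2, ty1zv.2.1.2)) (ac.1, b, ac.2)) (a, b)) :=
    congrArg negEnt (funext fun t => HT8 p t)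
  have hmu : negEnt (fun ty1zv : T × (Y1 × Z) × V => ∑ x, ∑ y2, p (ty1zv.2.2, ty1zv.1, x, ty1zv.2.1.1, y2, ty1zv.2.1.2)) = negEnt (fun vty1z : (V × T) × Y1 × Z => ∑ x, ∑ y2, p (vty1z.1.1, vty1z.1.2, x, vty1z.2.1, y2, vty1z.2.2)) := by
    unfold negEnt
    exact Fintype.sum_equiv (⟨fun x : T × (Y1 × Z) × V => ((x.2.2, x.1), x.2.1), fun y : (V × T) × Y1 × Z => (y.1.2, (y.2, y.1.1)), fun _ => rfl, fun _ => rfl⟩ : T × (Y1 × Z) × V ≃ (V × T) × (Y1 × Z)) _ _ fun x => rfl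
  have hB : negEnt (fun b : (Y1 × Z) × V => ∑ a : T, (fun ty1zv : T × (Y1 × Z) × V => ∑ x, ∑ y2, p (ty1zv.2.2, ty1zv.1, x, ty1zv.2.1.1, y2, ty1zv.2.1.2)) (a, b)) = negEnt (fun vy1z : V × Y1 × Z => ∑ t, ∑ x, ∑ y2, p (vy1z.1, t, x, vy1z.2.1, y2, vy1z.2.2)) := by
    unfold negEnt
    exact Fintype.sum_equiv (Equiv.prodComm ((Y1 × Z)) V) _ _ fun x => rfl
  have hnu : negEnt (fun ac : T × V => ∑ b : Y1 × Z, (fun ty1zv : T × (Y1 × Z) × V => ∑ x, ∑ y2, p (ty1zv.2.2, ty1zv.1, x, ty1zv.2.1.1, y2, ty1zv.2.1.2)) (ac.1, b, ac.2)) = negEnt (fun a : V × T => ∑ x, ∑ y1, ∑ y2, ∑ z, p (a.1, a.2, x, y1, y2, z)) := by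
    have h1 : negEnt (fun ac : T × V => ∑ b : Y1 × Z, (fun ty1zv : T × (Y1 × Z) × V => ∑ x, ∑ y2, p (ty1zv.2.2, ty1zv.1, x, ty1zv.2.1.1, y2, ty1zv.2.1.2)) (ac.1, b, ac.2))
        = negEnt (fun ac : T × V =>
            (fun a : V × T => ∑ x, ∑ y1, ∑ y2, ∑ z, p (a.1, a.2, x, y1, y2, z)) (ac.2, ac.1)) :=
      congrArg negEnt (funext fun ac => R5 p ac.2 ac.1)
    rw [h1]
    unfold negEnt
    exact Fintype.sum_equiv (Equiv.prodComm T V) _ _ fun x => rfl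
  have hAnu : negEnt (fun b : V => ∑ a : T, (fun ac : T × V => ∑ b : Y1 × Z, (fun ty1zv : T × (Y1 × Z) × V => ∑ x, ∑ y2, p (ty1zv.2.2, ty1zv.1, x, ty1zv.2.1.1, y2, ty1zv.2.1.2)) (ac.1, b, ac.2)) (a, b)) = negEnt (fun v : V => ∑ t, ∑ x, ∑ y1, ∑ y2, ∑ z, p (v, t, x, y1, y2, z)) :=
    congrArg negEnt (funext fun v => Finset.sum_congr rfl fun t _ => R5 p v t)
  rw [hcancel, hmu, hB, hnu, hAnu]
  ring

lemma L9 (hp0 : ∀ x, 0 ≤ p x) : condMutInf (fun tzv : T × Z × V => ∑ x, ∑ y1, ∑ y2, p (tzv.2.2, tzv.1, x, y1, y2, tzv.2.1)) = negEnt (fun vtz : (V × T) × Z => ∑ x, ∑ y1, ∑ y2, p (vtz.1.1, vtz.1.2, x, y1, y2, vtz.2)) - negEnt (fun vz : V × Z => ∑ t, ∑ x, ∑ y1, ∑ y2, p (vz.1, t, x, y1, y2, vz.2)) - (negEnt (fun a : V × T => ∑ x, ∑ y1, ∑ y2, ∑ z, p (a.1, a.2, x, y1, y2, z)) - negEnt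 (fun v : V => ∑ t, ∑ x, ∑ y1, ∑ y2, ∑ z, p (v, t, x, y1, y2, z))) := by
  unfold condMutInf
  rw [mutInf_eq (fun tzv : T × Z × V => ∑ x, ∑ y1, ∑ y2, p (tzv.2.2, tzv.1, x, y1, y2, tzv.2.1)) (fun _ => Finset.sum_nonneg fun _ _ => Finset.sum_nonneg fun _ _ => Finset.sum_nonneg fun _ _ => hp0 _)]
  rw [mutInf_eq (fun ac : T × V => ∑ b : Z, (fun tzv : T × Z × V => ∑ x, ∑ y1, ∑ y2, p (tzv.2.2, tzv.1, x, y1, y2, tzv.2.1)) (ac.1, b, ac.2)) (fun _ => Finset.sum_nonneg fun _ _ => Finset.sum_nonneg fun _ _ => Finset.sum_nonneg fun _ _ => Finset.sum_nonneg fun _ _ => hp0 _)]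
  have hcancel : negEnt (fun a : T => ∑ b : Z × V, (fun tzv : T × Z × V => ∑ x, ∑ y1, ∑ y2, p (tzv.2.2, tzv.1, x, y1, y2, tzv.2.1)) (a, b))
      = negEnt (fun a : T => ∑ b : V, (fun ac : T × V => ∑ b : Z, (fun tzv : T × Z × V => ∑ x, ∑ y1, ∑ y2, p (tzv.2.2, tzv.1, x, y1, y2, tzv.2.1)) (ac.1, b, ac.2)) (a, b)) :=
    congrArg negEnt (funext fun t => HT9 p t)
  have hmu : negEnt (fun tzv : T × Z × V => ∑ x, ∑ y1, ∑ y2, p (tzv.2.2, tzv.1, x, y1, y2, tzv.2.1)) = negEnt (fun vtz : (V × T) × Z => ∑ x, ∑ y1, ∑ y2, p (vtz.1.1, vtz.1.2, x, y1, y2, vtz.2)) := by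
    unfold negEnt
    exact Fintype.sum_equiv (⟨fun x : T × Z × V => ((x.2.2, x.1), x.2.1), fun y : (V × T) × Z => (y.1.2, (y.2, y.1.1)), fun _ => rfl, fun _ => rfl⟩ : T × Z × V ≃ (V × T) × Z) _ _ fun x => rfl
  have hB : negEnt (fun b : Z × V => ∑ a : T, (fun tzv : T × Z × V => ∑ x, ∑ y1, ∑ y2, p (tzv.2.2, tzv.1, x, y1, y2, tzv.2.1)) (a, b)) = negEnt (fun vz : V × Z => ∑ t, ∑ x, ∑ y1, ∑ y2, p (vz.1, t, x, y1, y2, vz.2)) := by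
    unfold negEnt
    exact Fintype.sum_equiv (Equiv.prodComm (Z) V) _ _ fun x => rfl
  have hnu : negEnt (fun ac : T × V => ∑ b : Z, (fun tzv : T × Z × V => ∑ x, ∑ y1, ∑ y2, p (tzv.2.2, tzv.1, x, y1, y2, tzv.2.1)) (ac.1, b, ac.2)) = negEnt (fun a : V × T => ∑ x, ∑ y1, ∑ y2, ∑ z, p (a.1, a.2, x, y1, y2, z)) := by
    have h1 : negEnt (fun ac : T × V => ∑ b : Z, (fun tzv : T × Z × V => ∑ x, ∑ y1, ∑ y2, p (tzv.2.2, tzv.1, x, y1, y2, tzv.2.1)) (ac.1, b, ac.2))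
        = negEnt (fun ac : T × V =>
            (fun a : V × T => ∑ x, ∑ y1, ∑ y2, ∑ z, p (a.1, a.2, x, y1, y2, z)) (ac.2, ac.1)) :=
      congrArg negEnt (funext fun ac => R6 p ac.2 ac.1)
    rw [h1]
    unfold negEnt
    exact Fintype.sum_equiv (Equiv.prodComm T V) _ _ fun x => rfl
  have hAnu : negEnt (fun b : V => ∑ a : T, (fun ac : T × V => ∑ b : Z, (fun tzv : T × Z × V => ∑ x, ∑ y1, ∑ y2, p (tzv.2.2, tzv.1, x, y1, y2, tzv.2.1)) (ac.1, b, ac.2)) (a, b)) = negEnt (fun v : V => ∑ t, ∑ x, ∑ y1, ∑ y2, ∑ z, p (v, t, x, y1, y2, z)) :=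
    congrArg negEnt (funext fun v => Finset.sum_congr rfl fun t _ => R6 p v t)
  rw [hcancel, hmu, hB, hnu, hAnu]
  ring

lemma L10 (hp0 : ∀ x, 0 ≤ p x) : negEnt (fun vtz : (V × T) × Z => ∑ x, ∑ y1, ∑ y2, p (vtz.1.1, vtz.1.2, x, y1, y2, vtz.2)) + negEnt (fun vy1z : V × Y1 × Z => ∑ t, ∑ x, ∑ y2, p (vy1z.1, t, x, vy1z.2.1, y2, vy1z.2.2)) ≤ negEnt (fun vty1z : (V × T) × Y1 × Z => ∑ x, ∑ y2, p (vty1z.1.1, vty1z.1.2, x, vty1z.2.1, y2, vty1z.2.2)) + negEnt (fun vz : V × Z => ∑ t, ∑ x, ∑ y1, ∑ y2, p (vz.1, t, x, y1, y2, vz.2)) := by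
  have sub := negEnt_submod
    (fun w : T × Y1 × (V × Z) => ∑ x, ∑ y2, p (w.2.2.1, w.1, x, w.2.1, y2, w.2.2.2))
    (fun _ => Finset.sum_nonneg fun _ _ => Finset.sum_nonneg fun _ _ => hp0 _)
  have hq : negEnt (fun w : T × Y1 × (V × Z) => ∑ x, ∑ y2, p (w.2.2.1, w.1, x, w.2.1, y2, w.2.2.2))
      = negEnt (fun vty1z : (V × T) × Y1 × Z => ∑ x, ∑ y2, p (vty1z.1.1, vty1z.1.2, x, vty1z.2.1, y2, vty1z.2.2)) := by
    unfold negEnt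
    exact Fintype.sum_equiv
      (⟨fun x : T × Y1 × (V × Z) => ((x.2.2.1, x.1), (x.2.1, x.2.2.2)),
        fun y : (V × T) × Y1 × Z => (y.1.2, (y.2.1, (y.1.1, y.2.2))),
        fun _ => rfl, fun _ => rfl⟩ : T × Y1 × (V × Z) ≃ (V × T) × Y1 × Z) _ _ fun x => rfl
  have hAC : negEnt (fun ac : T × (V × Z) => ∑ b : Y1,
        (fun w : T × Y1 × (V × Z) => ∑ x, ∑ y2, p (w.2.2.1, w.1, x, w.2.1, y2, w.2.2.2)) (ac.1, b, ac.2))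
      = negEnt (fun vtz : (V × T) × Z => ∑ x, ∑ y1, ∑ y2, p (vtz.1.1, vtz.1.2, x, y1, y2, vtz.2)) := by
    have h1 : (fun ac : T × (V × Z) => ∑ b : Y1,
        (fun w : T × Y1 × (V × Z) => ∑ x, ∑ y2, p (w.2.2.1, w.1, x, w.2.1, y2, w.2.2.2)) (ac.1, b, ac.2))
        = (fun ac : T × (V × Z) => (fun vtz : (V × T) × Z => ∑ x, ∑ y1, ∑ y2, p (vtz.1.1, vtz.1.2, x, y1, y2, vtz.2)) ((ac.2.1, ac.1), ac.2.2)) :=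
      funext fun ac => R7 p ac.2.1 ac.1 ac.2.2
    rw [h1]
    unfold negEnt
    exact Fintype.sum_equiv
      (⟨fun x : T × (V × Z) => ((x.2.1, x.1), x.2.2),
        fun y : (V × T) × Z => (y.1.2, (y.1.1, y.2)),
        fun _ => rfl, fun _ => rfl⟩ : T × (V × Z) ≃ (V × T) × Z) _ _ fun x => rfl
  have hBC : negEnt (fun bc : Y1 × (V × Z) => ∑ a : T,
        (fun w : T × Y1 × (V × Z) => ∑ x, ∑ y2, p (w.2.2.1, w.1, x, w.2.1, y2, w.2.2.2)) (a, bc.1, bc.2))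
      = negEnt (fun vy1z : V × Y1 × Z => ∑ t, ∑ x, ∑ y2, p (vy1z.1, t, x, vy1z.2.1, y2, vy1z.2.2)) := by
    unfold negEnt
    exact Fintype.sum_equiv
      (⟨fun x : Y1 × (V × Z) => (x.2.1, (x.1, x.2.2)),
        fun y : V × Y1 × Z => (y.2.1, (y.1, y.2.2)),
        fun _ => rfl, fun _ => rfl⟩ : Y1 × (V × Z) ≃ V × Y1 × Z) _ _ fun x => rfl
  have hC : negEnt (fun c : V × Z => ∑ a : T, ∑ b : Y1,
        (fun w : T × Y1 × (V × Z) => ∑ x, ∑ y2, p (w.2.2.1, w.1, x, w.2.1, y2, w.2.2.2)) (a, b, c))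
      = negEnt (fun vz : V × Z => ∑ t, ∑ x, ∑ y1, ∑ y2, p (vz.1, t, x, y1, y2, vz.2)) :=
    congrArg negEnt (funext fun c => R8 p c.1 c.2)
  rw [hq, hAC, hBC, hC] at sub
  linarith

end Ls

variable {V T Xv Y1 Y2 Z : Type}
  [Fintype V] [Fintype T] [Fintype Xv] [Fintype Y1] [Fintype Y2] [Fintype Z]

/-- **Choice of a single auxiliary random variable (the key step of the SD-WTBC converse).**
Let `(V,T,X,Y₁,Y₂,Z)` be finite random variables with joint PMF `p`.  At least one of
`I(T;Y₂|V) − I(T;Y₁,Z|V) ≤ 0` or `I(T;Y₂|V) − I(T;Z|V) ≥ 0` holds; in the first case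
`U = V` satisfies both `I(V;Y₂) − I(V;Z) ≤ I(U;Y₂) − I(U;Z)` and
`I(V,T;Y₂) − I(V,T;Y₁,Z) ≤ I(U;Y₂) − I(U;Y₁,Z)`, and in the second case `U = (V,T)` does;
in particular there is a choice of `U`, equal either to `V` or to `(V,T)`, satisfying both
inequalities. -/
theorem single_auxiliary_choice
    (p : V × T × Xv × Y1 × Y2 × Z → ℝ) (hp : IsPMF p) :
    -- marginal joint PMFs used below
    (fun pVY2 : (V × Y2 → ℝ) => fun pVZ : (V × Z → ℝ) => fun pV_Y1Z : (V × Y1 × Z → ℝ) =>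
     fun pVT_Y2 : ((V × T) × Y2 → ℝ) => fun pVT_Y1Z : ((V × T) × Y1 × Z → ℝ) =>
     fun pT_Y2_V : (T × Y2 × V → ℝ) => fun pT_Y1Z_V : (T × (Y1 × Z) × V → ℝ) =>
     fun pT_Z_V : (T × Z × V → ℝ) =>
      -- the disjunction of the two cases
      ((condMutInf pT_Y2_V - condMutInf pT_Y1Z_V ≤ 0 ∨
        0 ≤ condMutInf pT_Y2_V - condMutInf pT_Z_V) ∧
      -- first case: U = V works
      (condMutInf pT_Y2_V - condMutInf pT_Y1Z_V ≤ 0 →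
        (mutInf pVY2 - mutInf pVZ ≤ mutInf pVY2 - mutInf pVZ ∧
         mutInf pVT_Y2 - mutInf pVT_Y1Z ≤ mutInf pVY2 - mutInf pV_Y1Z)) ∧
      -- second case: U = (V,T) works
      (0 ≤ condMutInf pT_Y2_V - condMutInf pT_Z_V →
        (mutInf pVY2 - mutInf pVZ ≤ mutInf pVT_Y2 - mutInf (fun vtz : (V × T) × Z =>
            ∑ x, ∑ y1, ∑ y2, p (vtz.1.1, vtz.1.2, x, y1, y2, vtz.2)) ∧
         mutInf pVT_Y2 - mutInf pVT_Y1Z ≤ mutInf pVT_Y2 - mutInf pVT_Y1Z))))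
    (fun vy2 : V × Y2 => ∑ t, ∑ x, ∑ y1, ∑ z, p (vy2.1, t, x, y1, vy2.2, z))
    (fun vz : V × Z => ∑ t, ∑ x, ∑ y1, ∑ y2, p (vz.1, t, x, y1, y2, vz.2))
    (fun vy1z : V × Y1 × Z => ∑ t, ∑ x, ∑ y2, p (vy1z.1, t, x, vy1z.2.1, y2, vy1z.2.2))
    (fun vty2 : (V × T) × Y2 => ∑ x, ∑ y1, ∑ z, p (vty2.1.1, vty2.1.2, x, y1, vty2.2, z))
    (fun vty1z : (V × T) × Y1 × Z =>
      ∑ x, ∑ y2, p (vty1z.1.1, vty1z.1.2, x, vty1z.2.1, y2, vty1z.2.2))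
    (fun ty2v : T × Y2 × V => ∑ x, ∑ y1, ∑ z, p (ty2v.2.2, ty2v.1, x, y1, ty2v.2.1, z))
    (fun ty1zv : T × (Y1 × Z) × V =>
      ∑ x, ∑ y2, p (ty1zv.2.2, ty1zv.1, x, ty1zv.2.1.1, y2, ty1zv.2.1.2))
    (fun tzv : T × Z × V => ∑ x, ∑ y1, ∑ y2, p (tzv.2.2, tzv.1, x, y1, y2, tzv.2.1)) := by
  obtain ⟨hp0, -⟩ := hp
  beta_reduce
  rw [L1 p hp0, L2 p hp0, L3 p hp0, L4 p hp0, L5 p hp0, L6 p hp0, L7 p hp0, L8 p hp0,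
    L9 p hp0]
  have sub := L10 p hp0
  refine ⟨?_, fun h => ⟨le_rfl, by linarith⟩, fun h => ⟨by linarith, le_rfl⟩⟩
  exact or_iff_not_imp_left.2 fun h => by push_neg at h; linarith


end
end
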